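/- arXiv:1610.00561 — 6 statements merged into one kernel-verified Lean document; each statement's English description precedes it below -/
import Mathlib

section
/- (Closedness of the Weierstrass forms.) Let U : Ω → ℂ on an open set Ω ⊆ ℂ, let ψ = (ψ₁,ψ₂) solve Dψ = 0 and φ = (φ₁,φ₂) solve D^∨φ = 0, with all functions differentiable. Define x¹_z = (i/2)(conj φ₂ · conj ψ₂ + φ₁ψ₁), x²_z = (1/2)(conj φ₂ · conj ψ₂ − φ₁ψ₁), x³_z = (1/2)(conj φ₂ · ψ₁ + φ₁ · conj ψ₂), x⁴_z = (i/2)(conj φ₂ · ψ₁ − φ₁ · conj ψ₂). Then for each k = 1, 2, 3, 4 the function ∂̄(x^k_z) is real-valued; equivalently, each 1-form x^k_z dz + conj(x^k_z) dz̄ is closed, so the Weierstrass integrals are locally well defined. -/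
open Complex Matrix Finset

noncomputable section

/-- Wirtinger derivative `∂f = ½(f_x − i f_y)`. -/
def wdz (f : ℂ → ℂ) (z : ℂ) : ℂ :=
  (1 / 2) * (fderiv ℝ f z 1 - Complex.I * fderiv ℝ f z Complex.I)

/-- Conjugate Wirtinger derivative `∂̄f = ½(f_x + i f_y)`. -/
def wdzb (f : ℂ → ℂ) (z : ℂ) : ℂ :=
  (1 / 2) * (fderiv ℝ f z 1 + Complex.I * fderiv ℝ f z Complex.I)

/-- The Dirac equation `Dψ = 0` with potential `U` on `Ω`:
`∂ψ₂ + Uψ₁ = 0` and `−∂̄ψ₁ + Ūψ₂ = 0`. -/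
def DiracEq (U ψ₁ ψ₂ : ℂ → ℂ) (Ω : Set ℂ) : Prop :=
  ∀ z ∈ Ω, wdz ψ₂ z + U z * ψ₁ z = 0 ∧
    -wdzb ψ₁ z + (starRingEnd ℂ) (U z) * ψ₂ z = 0

def Gam : Matrix (Fin 2) (Fin 2) ℂ := !![0, 1; -1, 0]

def sig3 : Matrix (Fin 2) (Fin 2) ℂ := !![1, 0; 0, -1]

/-- The quaternionic matrix associated to a spinor. -/
def spinMat (ψ₁ ψ₂ : ℂ → ℂ) (z : ℂ) : Matrix (Fin 2) (Fin 2) ℂ :=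
  !![ψ₁ z, -(starRingEnd ℂ) (ψ₂ z); ψ₂ z, (starRingEnd ℂ) (ψ₁ z)]

def wdzM (F : ℂ → Matrix (Fin 2) (Fin 2) ℂ) (z : ℂ) : Matrix (Fin 2) (Fin 2) ℂ :=
  Matrix.of fun i j => wdz (fun w => F w i j) z

def wdzbM (F : ℂ → Matrix (Fin 2) (Fin 2) ℂ) (z : ℂ) : Matrix (Fin 2) (Fin 2) ℂ :=
  Matrix.of fun i j => wdzb (fun w => F w i j) z

/-- `S` is a primitive of `Γω(Φ,Ψ)` on `Ω`. -/
def IsPrimitive (Φ Ψ S : ℂ → Matrix (Fin 2) (Fin 2) ℂ) (Ω : Set ℂ) : Prop :=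
  ∀ z ∈ Ω,
    wdzM S z = (-(Complex.I / 2)) • (Gam * (Φ z)ᵀ * (sig3 + 1) * Ψ z) ∧
    wdzbM S z = (-(Complex.I / 2)) • (Gam * (Φ z)ᵀ * (sig3 - 1) * Ψ z)

def MatDiffOn (F : ℂ → Matrix (Fin 2) (Fin 2) ℂ) (Ω : Set ℂ) : Prop :=
  ∀ z ∈ Ω, ∀ i j, DifferentiableAt ℝ (fun w => F w i j) z

/-- A matrix solution of the Dirac equation: both columns solve `Dψ = 0`. -/
def MatDiracEq (U : ℂ → ℂ) (Ψ : ℂ → Matrix (Fin 2) (Fin 2) ℂ) (Ω : Set ℂ) : Prop :=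
  ∀ j : Fin 2, DiracEq U (fun z => Ψ z 0 j) (fun z => Ψ z 1 j) Ω

/-- The Weierstrass derivatives `x^k_z` of the Weierstrass representation. -/
def weierXz (ψ₁ ψ₂ φ₁ φ₂ : ℂ) : Fin 4 → ℂ :=
  ![(Complex.I / 2) * ((starRingEnd ℂ) φ₂ * (starRingEnd ℂ) ψ₂ + φ₁ * ψ₁),
    (1 / 2) * ((starRingEnd ℂ) φ₂ * (starRingEnd ℂ) ψ₂ - φ₁ * ψ₁),
    (1 / 2) * ((starRingEnd ℂ) φ₂ * ψ₁ + φ₁ * (starRingEnd ℂ) ψ₂),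
    (Complex.I / 2) * ((starRingEnd ℂ) φ₂ * ψ₁ - φ₁ * (starRingEnd ℂ) ψ₂)]

/-- Identification of `ℝ⁴` with `u(2)`. -/
def toU2 (x : Fin 4 → ℝ) : Matrix (Fin 2) (Fin 2) ℂ :=
  !![Complex.I * (x 2 : ℂ) + (x 3 : ℂ), -(x 0 : ℂ) - Complex.I * (x 1 : ℂ);
     (x 0 : ℂ) - Complex.I * (x 1 : ℂ), -Complex.I * (x 2 : ℂ) + (x 3 : ℂ)]

/-!
The Dirac equations `∂ψ₂ = -Uψ₁`, `∂̄ψ₁ = Ūψ₂` and `∂φ₂ = -Ūφ₁`, `∂̄φ₁ = Uφ₂`, together with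
`∂̄ f̄ = conj (∂f)`, give `∂̄(φ̄₂ψ̄₂) = -conj ∂̄(φ₁ψ₁)` and `∂̄(φ̄₂ψ₁) = conj ∂̄(φ₁ψ̄₂)`.
Each `x^k_z` is `i/2` or `1/2` times the sum or difference of one of these pairs of products,
with the sign and factor chosen so that `∂̄ x^k_z` is `±Re` or `±Im` of `∂̄` of a single product.
-/

open ComplexConjugate

section Wirtinger

variable {f g : ℂ → ℂ} {z : ℂ}

lemma wdzb_fun_add (hf : DifferentiableAt ℝ f z) (hg : DifferentiableAt ℝ g z) :
    wdzb (fun w => f w + g w) z = wdzb f z + wdzb g z := by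
  simp only [wdzb, fderiv_fun_add hf hg, _root_.add_apply]
  ring

lemma wdzb_fun_sub (hf : DifferentiableAt ℝ f z) (hg : DifferentiableAt ℝ g z) :
    wdzb (fun w => f w - g w) z = wdzb f z - wdzb g z := by
  simp only [wdzb, fderiv_fun_sub hf hg, _root_.sub_apply]
  ring

lemma wdzb_const_mul (c : ℂ) (hf : DifferentiableAt ℝ f z) :
    wdzb (fun w => c * f w) z = c * wdzb f z := by
  simp only [wdzb, fderiv_const_mul hf c, _root_.smul_apply, smul_eq_mul]
  ring

lemma wdzb_fun_mul (hf : DifferentiableAt ℝ f z) (hg : DifferentiableAt ℝ g z) :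
    wdzb (fun w => f w * g w) z = f z * wdzb g z + g z * wdzb f z := by
  simp only [wdzb, fderiv_fun_mul hf hg, _root_.add_apply, _root_.smul_apply,
    smul_eq_mul]
  ring

lemma wdzb_conj (f : ℂ → ℂ) (z : ℂ) :
    wdzb (fun w => conj (f w)) z = conj (wdz f z) := by
  have hcomp : (fun w => conj (f w)) = conjCLE ∘ f := rfl
  rw [wdzb, wdz, hcomp, conjCLE.comp_fderiv]
  simp [map_ofNat]

end Wirtinger

namespace DiracEq

variable {U ψ₁ ψ₂ : ℂ → ℂ} {Ω : Set ℂ} {z : ℂ}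

lemma wdz_snd (h : DiracEq U ψ₁ ψ₂ Ω) (hz : z ∈ Ω) : wdz ψ₂ z = -(U z * ψ₁ z) :=
  eq_neg_of_add_eq_zero_left (h z hz).1

lemma wdzb_fst (h : DiracEq U ψ₁ ψ₂ Ω) (hz : z ∈ Ω) : wdzb ψ₁ z = conj (U z) * ψ₂ z :=
  neg_add_eq_zero.mp (h z hz).2

end DiracEq

section WeierstrassProducts

variable {U ψ₁ ψ₂ φ₁ φ₂ : ℂ → ℂ} {Ω : Set ℂ} {z : ℂ}

lemma wdzb_conj_mul_conj_eq_neg_conj (hψ : DiracEq U ψ₁ ψ₂ Ω)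
    (hφ : DiracEq (fun w => conj (U w)) φ₁ φ₂ Ω) (hz : z ∈ Ω)
    (hψ₁ : DifferentiableAt ℝ ψ₁ z) (hψ₂ : DifferentiableAt ℝ ψ₂ z)
    (hφ₁ : DifferentiableAt ℝ φ₁ z) (hφ₂ : DifferentiableAt ℝ φ₂ z) :
    wdzb (fun w => conj (φ₂ w) * conj (ψ₂ w)) z = -conj (wdzb (fun w => φ₁ w * ψ₁ w) z) := by
  rw [wdzb_fun_mul (by fun_prop) (by fun_prop), wdzb_fun_mul hφ₁ hψ₁, wdzb_conj, wdzb_conj,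
    hψ.wdz_snd hz, hψ.wdzb_fst hz, hφ.wdz_snd hz, hφ.wdzb_fst hz]
  simp only [map_neg, map_mul, map_add, Complex.conj_conj]
  ring

lemma wdzb_conj_mul_eq_conj (hψ : DiracEq U ψ₁ ψ₂ Ω)
    (hφ : DiracEq (fun w => conj (U w)) φ₁ φ₂ Ω) (hz : z ∈ Ω)
    (hψ₁ : DifferentiableAt ℝ ψ₁ z) (hψ₂ : DifferentiableAt ℝ ψ₂ z)
    (hφ₁ : DifferentiableAt ℝ φ₁ z) (hφ₂ : DifferentiableAt ℝ φ₂ z) :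
    wdzb (fun w => conj (φ₂ w) * ψ₁ w) z = conj (wdzb (fun w => φ₁ w * conj (ψ₂ w)) z) := by
  rw [wdzb_fun_mul (by fun_prop) hψ₁, wdzb_fun_mul hφ₁ (by fun_prop), wdzb_conj, wdzb_conj,
    hψ.wdz_snd hz, hψ.wdzb_fst hz, hφ.wdz_snd hz, hφ.wdzb_fst hz]
  simp only [map_neg, map_mul, map_add, Complex.conj_conj]
  ring

end WeierstrassProducts

theorem weierstrass_forms_closed_general
    (Ω : Set ℂ) (U ψ₁ ψ₂ φ₁ φ₂ : ℂ → ℂ)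
    (hψ₁ : ∀ z ∈ Ω, DifferentiableAt ℝ ψ₁ z)
    (hψ₂ : ∀ z ∈ Ω, DifferentiableAt ℝ ψ₂ z)
    (hφ₁ : ∀ z ∈ Ω, DifferentiableAt ℝ φ₁ z)
    (hφ₂ : ∀ z ∈ Ω, DifferentiableAt ℝ φ₂ z)
    (hψ : DiracEq U ψ₁ ψ₂ Ω)
    (hφ : DiracEq (fun z => (starRingEnd ℂ) (U z)) φ₁ φ₂ Ω) :
    ∀ z ∈ Ω, ∀ k : Fin 4,
      (wdzb (fun w => weierXz (ψ₁ w) (ψ₂ w) (φ₁ w) (φ₂ w) k) z).im = 0 := by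
  intro z hz k
  have dψ₁ := hψ₁ z hz
  have dψ₂ := hψ₂ z hz
  have dφ₁ := hφ₁ z hz
  have dφ₂ := hφ₂ z hz
  have h₁₂ := wdzb_conj_mul_conj_eq_neg_conj hψ hφ hz dψ₁ dψ₂ dφ₁ dφ₂
  have h₃₄ := wdzb_conj_mul_eq_conj hψ hφ hz dψ₁ dψ₂ dφ₁ dφ₂
  fin_cases k <;> simp only [weierXz, Fin.reduceFinMk, Matrix.cons_val]
  · rw [wdzb_const_mul _ (by fun_prop), wdzb_fun_add (by fun_prop) (by fun_prop), h₁₂]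
    simp [Complex.mul_im]
  · rw [wdzb_const_mul _ (by fun_prop), wdzb_fun_sub (by fun_prop) (by fun_prop), h₁₂]
    simp [Complex.mul_im]
  · rw [wdzb_const_mul _ (by fun_prop), wdzb_fun_add (by fun_prop) (by fun_prop), h₃₄]
    simp [Complex.mul_im]
  · rw [wdzb_const_mul _ (by fun_prop), wdzb_fun_sub (by fun_prop) (by fun_prop), h₃₄]
    simp [Complex.mul_im]

/-- closedness of the Weierstrass forms: if `ψ` solves `Dψ = 0` and
`φ` solves `D^∨φ = 0`, then each `∂̄(x^k_z)` is real-valued, so each 1-form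
`x^k_z dz + conj(x^k_z) dz̄` is closed and the Weierstrass integrals are locally defined. -/
theorem weierstrass_forms_closed
    (Ω : Set ℂ) (hΩ : IsOpen Ω) (U ψ₁ ψ₂ φ₁ φ₂ : ℂ → ℂ)
    (hψ₁ : ∀ z ∈ Ω, DifferentiableAt ℝ ψ₁ z)
    (hψ₂ : ∀ z ∈ Ω, DifferentiableAt ℝ ψ₂ z)
    (hφ₁ : ∀ z ∈ Ω, DifferentiableAt ℝ φ₁ z)
    (hφ₂ : ∀ z ∈ Ω, DifferentiableAt ℝ φ₂ z)
    (hψ : DiracEq U ψ₁ ψ₂ Ω)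
    (hφ : DiracEq (fun z => (starRingEnd ℂ) (U z)) φ₁ φ₂ Ω) :
    ∀ z ∈ Ω, ∀ k : Fin 4,
      (wdzb (fun w => weierXz (ψ₁ w) (ψ₂ w) (φ₁ w) (φ₂ w) k) z).im = 0 :=
  weierstrass_forms_closed_general Ω U ψ₁ ψ₂ φ₁ φ₂ hψ₁ hψ₂ hφ₁ hφ₂ hψ hφ
end
end

section
/- (Theorem 2.) Let U : Ω → ℂ be differentiable on an open set Ω ⊆ ℂ, let Ψ₀ and Φ₀ be matrix solutions of DΨ = 0 and D^∨Φ = 0, and let S = S(Φ₀,Ψ₀) be a primitive of Γω(Φ₀,Ψ₀) which is invertible at every point of Ω (so S is the u(2)-valued Weierstrass immersion defined by the spinors Ψ₀, Φ₀). Set S' = Γ Sᵀ Γ (a primitive of Γω(Ψ₀,Φ₀)), Ψ̃₀ = Ψ₀ S⁻¹, and Φ̃₀ = Φ₀ (S')⁻¹. Then the map S⁻¹ : Ω → u(2), obtained from the surface S by applying the composition of the inversion and the reflection (x¹,x²,x³,x⁴) ↦ (−x¹,−x²,−x³,x⁴), satisfies the Weierstrass derivative equations with spinors Ψ̃₀,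 Φ̃₀: ∂(S⁻¹) = −(i/2)·Γ·Φ̃₀ᵀ(σ₃+1)Ψ̃₀ and ∂̄(S⁻¹) = −(i/2)·Γ·Φ̃₀ᵀ(σ₃−1)Ψ̃₀. Hence the surface S⁻¹ is defined by the spinors Ψ̃₀ and Φ̃₀ via the Weierstrass representation. -/
open Complex Matrix Finset

noncomputable section

/-! The derivative of matrix inversion at an invertible `S` is `X ↦ -S⁻¹ X S⁻¹`, so
`∂(S⁻¹) = -S⁻¹ (∂S) S⁻¹`, and likewise for `∂̄`. Inserting `∂S = -(i/2) Γ Φ₀ᵀ (σ₃ + 1) Ψ₀`,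
the right factor `S⁻¹` is absorbed into `Ψ̃₀ = Ψ₀ S⁻¹`. For the left factor, `Γ² = -1` gives
`S⁻¹ Γ = -Γ (Γ S⁻¹ Γ)`, and `Γ S⁻¹ Γ = ((ΓSᵀΓ)⁻¹)ᵀ`, so `-S⁻¹ Γ Φ₀ᵀ = Γ Φ̃₀ᵀ`. -/

section MatrixCalculus

-- Any submultiplicative norm would do: it is only used to differentiate `Ring.inverse`.
attribute [local instance] Matrix.linftyOpNormedRing Matrix.linftyOpNormedAlgebra

variable {F S : ℂ → Matrix (Fin 2) (Fin 2) ℂ} {z : ℂ}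

lemma differentiableAt_of_entries (hF : ∀ i j, DifferentiableAt ℝ (fun w => F w i j) z) :
    DifferentiableAt ℝ F z :=
  differentiableAt_pi.2 fun i => differentiableAt_pi.2 (hF i)

lemma fderiv_entry (hF : DifferentiableAt ℝ F z) (i j : Fin 2) (v : ℂ) :
    fderiv ℝ (fun w => F w i j) z v = fderiv ℝ F z v i j := by
  rw [fderiv_apply (differentiableAt_pi.1 hF i) j, fderiv_apply hF i]
  rfl

lemma wdzM_eq_fderiv (hF : DifferentiableAt ℝ F z) :
    wdzM F z = (1 / 2 : ℂ) • (fderiv ℝ F z 1 - I • fderiv ℝ F z I) := by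
  ext i j
  simp [wdzM, wdz, fderiv_entry hF]

lemma wdzbM_eq_fderiv (hF : DifferentiableAt ℝ F z) :
    wdzbM F z = (1 / 2 : ℂ) • (fderiv ℝ F z 1 + I • fderiv ℝ F z I) := by
  ext i j
  simp [wdzbM, wdzb, fderiv_entry hF]

lemma differentiableAt_matrix_inv (hS : DifferentiableAt ℝ S z) (hdet : IsUnit (S z).det) :
    DifferentiableAt ℝ (fun w => (S w)⁻¹) z := by
  simp_rw [Matrix.nonsing_inv_eq_ringInverse]
  exact hS.inverse ((Matrix.isUnit_iff_isUnit_det _).2 hdet)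

lemma fderiv_inv_apply (hS : DifferentiableAt ℝ S z) (hdet : IsUnit (S z).det) (v : ℂ) :
    fderiv ℝ (fun w => (S w)⁻¹) z v = -((S z)⁻¹ * fderiv ℝ S z v * (S z)⁻¹) := by
  obtain ⟨u, hu⟩ := (Matrix.isUnit_iff_isUnit_det _).2 hdet
  have hinv : HasFDerivAt Ring.inverse
      (-ContinuousLinearMap.mulLeftRight ℝ _ (S z)⁻¹ (S z)⁻¹) (S z) := by
    rw [← hu, ← Matrix.coe_units_inv]
    exact hasFDerivAt_ringInverse u
  have hcomp : (fun w => (S w)⁻¹) = Ring.inverse ∘ S :=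
    funext fun w => Matrix.nonsing_inv_eq_ringInverse (S w)
  rw [hcomp]
  -- `exact`, not `rw`: this norm's topology agrees with the product topology only up to unfolding
  exact congrArg (fun L => L v) (hinv.comp z hS.hasFDerivAt).fderiv

lemma wdzM_inv (hS : ∀ i j, DifferentiableAt ℝ (fun w => S w i j) z)
    (hdet : IsUnit (S z).det) :
    wdzM (fun w => (S w)⁻¹) z = -((S z)⁻¹ * wdzM S z * (S z)⁻¹) := by
  have hS' := differentiableAt_of_entries hS
  have hinv := differentiableAt_matrix_inv hS' hdet
  rw [wdzM_eq_fderiv hinv, wdzM_eq_fderiv hS', fderiv_inv_apply hS' hdet,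
    fderiv_inv_apply hS' hdet]
  simp only [Matrix.mul_smul, Matrix.smul_mul, Matrix.mul_sub, Matrix.sub_mul, smul_neg,
    smul_sub]
  abel

lemma wdzbM_inv (hS : ∀ i j, DifferentiableAt ℝ (fun w => S w i j) z)
    (hdet : IsUnit (S z).det) :
    wdzbM (fun w => (S w)⁻¹) z = -((S z)⁻¹ * wdzbM S z * (S z)⁻¹) := by
  have hS' := differentiableAt_of_entries hS
  have hinv := differentiableAt_matrix_inv hS' hdet
  rw [wdzbM_eq_fderiv hinv, wdzbM_eq_fderiv hS', fderiv_inv_apply hS' hdet,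
    fderiv_inv_apply hS' hdet]
  simp only [Matrix.mul_smul, Matrix.smul_mul, Matrix.mul_add, Matrix.add_mul, smul_neg,
    smul_add]
  abel

end MatrixCalculus

lemma Gam_mul_Gam : Gam * Gam = -1 := by
  ext i j
  fin_cases i <;> fin_cases j <;> simp [Gam, Matrix.mul_apply]

lemma Gam_transpose : Gamᵀ = -Gam := by
  ext i j
  fin_cases i <;> fin_cases j <;> simp [Gam]

lemma neg_Gam_inv : (-Gam)⁻¹ = Gam :=
  Matrix.inv_eq_right_inv (by rw [Matrix.neg_mul, Gam_mul_Gam, neg_neg])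

lemma transpose_inv_Gam_conj (A : Matrix (Fin 2) (Fin 2) ℂ) :
    ((Gam * Aᵀ * Gam)⁻¹)ᵀ = Gam * A⁻¹ * Gam := by
  rw [Matrix.transpose_nonsing_inv, Matrix.transpose_mul, Matrix.transpose_mul,
    Matrix.transpose_transpose, Gam_transpose, Matrix.mul_inv_rev, Matrix.mul_inv_rev,
    neg_Gam_inv, Matrix.mul_assoc]

lemma inv_mul_Gam_form_mul_inv (A Φ M Ψ : Matrix (Fin 2) (Fin 2) ℂ) :
    A⁻¹ * (Gam * Φᵀ * M * Ψ) * A⁻¹ = -(Gam * (Φ * (Gam * Aᵀ * Gam)⁻¹)ᵀ * M * (Ψ * A⁻¹)) := by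
  rw [Matrix.transpose_mul, transpose_inv_Gam_conj]
  simp only [← Matrix.mul_assoc, Gam_mul_Gam, Matrix.neg_mul, Matrix.one_mul, neg_neg]

theorem inverted_surface_weierstrass_spinors_general
    (Ω : Set ℂ) (ψ₁ ψ₂ φ₁ φ₂ : ℂ → ℂ)
    (S : ℂ → Matrix (Fin 2) (Fin 2) ℂ)
    (hS : IsPrimitive (spinMat φ₁ φ₂) (spinMat ψ₁ ψ₂) S Ω)
    (hSdiff : MatDiffOn S Ω)
    (hSinv : ∀ z ∈ Ω, IsUnit (S z).det) :
    ∀ z ∈ Ω,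
      wdzM (fun w => (S w)⁻¹) z =
        (-(Complex.I / 2)) •
          (Gam * (spinMat φ₁ φ₂ z * (Gam * (S z)ᵀ * Gam)⁻¹)ᵀ * (sig3 + 1) *
            (spinMat ψ₁ ψ₂ z * (S z)⁻¹)) ∧
      wdzbM (fun w => (S w)⁻¹) z =
        (-(Complex.I / 2)) •
          (Gam * (spinMat φ₁ φ₂ z * (Gam * (S z)ᵀ * Gam)⁻¹)ᵀ * (sig3 - 1) *
            (spinMat ψ₁ ψ₂ z * (S z)⁻¹)) := by
  intro z hz
  obtain ⟨hdz, hdzb⟩ := hS z hz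
  constructor
  · rw [wdzM_inv (hSdiff z hz) (hSinv z hz), hdz, Matrix.mul_smul, Matrix.smul_mul,
      inv_mul_Gam_form_mul_inv, smul_neg, neg_neg]
  · rw [wdzbM_inv (hSdiff z hz) (hSinv z hz), hdzb, Matrix.mul_smul, Matrix.smul_mul,
      inv_mul_Gam_form_mul_inv, smul_neg, neg_neg]

/-- Theorem 2: the surface `S⁻¹`, obtained from the Weierstrass immersion
`S = S(Φ₀,Ψ₀)` by the composition of the inversion and the reflection
`(x¹,x²,x³,x⁴) ↦ (−x¹,−x²,−x³,x⁴)`, satisfies the Weierstrass derivative equations with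
spinors `Ψ̃₀ = Ψ₀ S⁻¹` and `Φ̃₀ = Φ₀ (ΓSᵀΓ)⁻¹`. -/
theorem inverted_surface_weierstrass_spinors
    (Ω : Set ℂ) (hΩ : IsOpen Ω) (U ψ₁ ψ₂ φ₁ φ₂ : ℂ → ℂ)
    (hU : ∀ z ∈ Ω, DifferentiableAt ℝ U z)
    (hψ₁ : ∀ z ∈ Ω, DifferentiableAt ℝ ψ₁ z)
    (hψ₂ : ∀ z ∈ Ω, DifferentiableAt ℝ ψ₂ z)
    (hφ₁ : ∀ z ∈ Ω, DifferentiableAt ℝ φ₁ z)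
    (hφ₂ : ∀ z ∈ Ω, DifferentiableAt ℝ φ₂ z)
    (hψ : DiracEq U ψ₁ ψ₂ Ω)
    (hφ : DiracEq (fun z => (starRingEnd ℂ) (U z)) φ₁ φ₂ Ω)
    (S : ℂ → Matrix (Fin 2) (Fin 2) ℂ)
    (hS : IsPrimitive (spinMat φ₁ φ₂) (spinMat ψ₁ ψ₂) S Ω)
    (hSdiff : MatDiffOn S Ω)
    (hSinv : ∀ z ∈ Ω, IsUnit (S z).det) :
    ∀ z ∈ Ω,
      wdzM (fun w => (S w)⁻¹) z =
        (-(Complex.I / 2)) •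
          (Gam * (spinMat φ₁ φ₂ z * (Gam * (S z)ᵀ * Gam)⁻¹)ᵀ * (sig3 + 1) *
            (spinMat ψ₁ ψ₂ z * (S z)⁻¹)) ∧
      wdzbM (fun w => (S w)⁻¹) z =
        (-(Complex.I / 2)) •
          (Gam * (spinMat φ₁ φ₂ z * (Gam * (S z)ᵀ * Gam)⁻¹)ᵀ * (sig3 - 1) *
            (spinMat ψ₁ ψ₂ z * (S z)⁻¹)) :=
  inverted_surface_weierstrass_spinors_general Ω ψ₁ ψ₂ φ₁ φ₂ S hS hSdiff hSinv
end
end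

section
/- (Swap–transpose identity for S.) Let Φ, Ψ : Ω → M₂(ℂ) and let S be a differentiable matrix function with ∂S = −(i/2)·Γ·Φᵀ(σ₃+1)Ψ and ∂̄S = −(i/2)·Γ·Φᵀ(σ₃−1)Ψ. Then the matrix function S' := Γ Sᵀ Γ satisfies ∂S' = −(i/2)·Γ·Ψᵀ(σ₃+1)Φ and ∂̄S' = −(i/2)·Γ·Ψᵀ(σ₃−1)Φ; i.e. Γ S(Φ,Ψ)ᵀ Γ is a primitive S(Ψ,Φ). In particular, when S is invertible, −Γ⁻¹ S⁻¹ Γ = Γ S⁻¹ Γ = ((Γ Sᵀ Γ)⁻¹)ᵀ. -/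
open Complex Matrix Finset

noncomputable section

/-! The map `S ↦ Γ Sᵀ Γ` is `S ↦ -adj S`, which only permutes the entries of `S` up to sign,
so it commutes with `∂` and `∂̄` entrywise. Applied to `Γ Φᵀ (σ₃ ± 1) Ψ` it gives
`Γ Ψᵀ (σ₃ ± 1) Φ`, because `Γ` is orthogonal and `σ₃ ± 1` is symmetric. The identities for
`S⁻¹` are the same algebra. -/

section Orthogonal

variable {n R : Type*} [Fintype n] [DecidableEq n] [CommRing R] {J : Matrix n n R}

lemma mul_transpose_mul_swap (hJ : Jᵀ * J = 1) {B : Matrix n n R} (hB : Bᵀ = B)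
    (A C : Matrix n n R) : J * (J * Aᵀ * B * C)ᵀ * J = J * Cᵀ * B * A := by
  simp only [transpose_mul, transpose_transpose, hB, Matrix.mul_assoc, hJ, Matrix.mul_one]

lemma transpose_inv_mul_transpose_mul (hJ : Jᵀ * J = 1) (X : Matrix n n R) :
    ((J * Xᵀ * J)⁻¹)ᵀ = J * X⁻¹ * J := by
  have hJinv : J⁻¹ = Jᵀ := inv_eq_left_inv hJ
  simp only [Matrix.mul_inv_rev, hJinv, transpose_mul, transpose_transpose, transpose_nonsing_inv,
    Matrix.mul_assoc]

end Orthogonal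

lemma Gam_transpose_mul_self : Gamᵀ * Gam = 1 := by
  rw [Gam_transpose]; ext i j; fin_cases i <;> fin_cases j <;> simp [Gam]

lemma Gam_inv : Gam⁻¹ = -Gam := by
  rw [inv_eq_left_inv Gam_transpose_mul_self, Gam_transpose]

lemma sig3_transpose : sig3ᵀ = sig3 := by
  ext i j; fin_cases i <;> fin_cases j <;> simp [sig3]

lemma Gam_mul_transpose_mul_Gam (M : Matrix (Fin 2) (Fin 2) ℂ) :
    Gam * Mᵀ * Gam = -adjugate M := by
  rw [adjugate_fin_two]
  ext i j
  fin_cases i <;> fin_cases j <;> simp [Gam, mul_apply, vecMul, dotProduct, Fin.sum_univ_two]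

lemma of_apply_neg_adjugate {α β R : Type*} [CommRing R] {D : (α → R) → β → R}
    (hD : ∀ f z, D (fun w => -f w) z = -D f z) (S : α → Matrix (Fin 2) (Fin 2) R) (z : β) :
    (of fun i j => D (fun w => (-adjugate (S w)) i j) z) =
      -adjugate (of fun i j => D (fun w => S w i j) z) := by
  ext i j; fin_cases i <;> fin_cases j <;> simp [adjugate_fin_two, hD]

lemma wdz_neg (f : ℂ → ℂ) (z : ℂ) : wdz (fun w => -f w) z = -wdz f z := by
  rw [wdz, wdz, fderiv_fun_neg, _root_.neg_apply, _root_.neg_apply]; ring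

lemma wdzb_neg (f : ℂ → ℂ) (z : ℂ) : wdzb (fun w => -f w) z = -wdzb f z := by
  rw [wdzb, wdzb, fderiv_fun_neg, _root_.neg_apply, _root_.neg_apply]; ring

lemma wdzM_Gam_conj (S : ℂ → Matrix (Fin 2) (Fin 2) ℂ) (z : ℂ) :
    wdzM (fun w => Gam * (S w)ᵀ * Gam) z = Gam * (wdzM S z)ᵀ * Gam := by
  simp only [wdzM, Gam_mul_transpose_mul_Gam]
  exact of_apply_neg_adjugate wdz_neg S z

lemma wdzbM_Gam_conj (S : ℂ → Matrix (Fin 2) (Fin 2) ℂ) (z : ℂ) :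
    wdzbM (fun w => Gam * (S w)ᵀ * Gam) z = Gam * (wdzbM S z)ᵀ * Gam := by
  simp only [wdzbM, Gam_mul_transpose_mul_Gam]
  exact of_apply_neg_adjugate wdzb_neg S z

lemma Gam_conj_smul_swap (c : ℂ) (A B C : Matrix (Fin 2) (Fin 2) ℂ) (hB : Bᵀ = B) :
    Gam * (c • (Gam * Aᵀ * B * C))ᵀ * Gam = c • (Gam * Cᵀ * B * A) := by
  rw [transpose_smul, Matrix.mul_smul, Matrix.smul_mul,
    mul_transpose_mul_swap Gam_transpose_mul_self hB]

lemma IsPrimitive.Gam_conj_transpose {Φ Ψ S : ℂ → Matrix (Fin 2) (Fin 2) ℂ} {Ω : Set ℂ}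
    (hS : IsPrimitive Φ Ψ S Ω) : IsPrimitive Ψ Φ (fun z => Gam * (S z)ᵀ * Gam) Ω := by
  intro z hz
  obtain ⟨hdz, hdzb⟩ := hS z hz
  have hplus : (sig3 + 1)ᵀ = sig3 + 1 := by rw [transpose_add, transpose_one, sig3_transpose]
  have hminus : (sig3 - 1)ᵀ = sig3 - 1 := by rw [transpose_sub, transpose_one, sig3_transpose]
  exact ⟨by rw [wdzM_Gam_conj, hdz, Gam_conj_smul_swap _ _ _ _ hplus],
    by rw [wdzbM_Gam_conj, hdzb, Gam_conj_smul_swap _ _ _ _ hminus]⟩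

theorem swap_transpose_primitive_general
    (Ω : Set ℂ) (Φ Ψ S : ℂ → Matrix (Fin 2) (Fin 2) ℂ)
    (hS : IsPrimitive Φ Ψ S Ω) :
    IsPrimitive Ψ Φ (fun z => Gam * (S z)ᵀ * Gam) Ω ∧
    (∀ z ∈ Ω, IsUnit (S z).det →
      -(Gam⁻¹ * (S z)⁻¹ * Gam) = Gam * (S z)⁻¹ * Gam ∧
      Gam * (S z)⁻¹ * Gam = ((Gam * (S z)ᵀ * Gam)⁻¹)ᵀ) :=
  ⟨hS.Gam_conj_transpose, fun z _ _ =>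
    ⟨by rw [Gam_inv, Matrix.neg_mul, Matrix.neg_mul, neg_neg],
      (transpose_inv_mul_transpose_mul Gam_transpose_mul_self (S z)).symm⟩⟩

/-- swap–transpose identity for `S`: if `S` is a primitive `S(Φ,Ψ)`, then
`S' = Γ Sᵀ Γ` is a primitive `S(Ψ,Φ)`; and when `S` is invertible,
`−Γ⁻¹ S⁻¹ Γ = Γ S⁻¹ Γ = ((Γ Sᵀ Γ)⁻¹)ᵀ`. -/
theorem swap_transpose_primitive
    (Ω : Set ℂ) (hΩ : IsOpen Ω) (Φ Ψ S : ℂ → Matrix (Fin 2) (Fin 2) ℂ)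
    (hSdiff : MatDiffOn S Ω)
    (hS : IsPrimitive Φ Ψ S Ω) :
    IsPrimitive Ψ Φ (fun z => Gam * (S z)ᵀ * Gam) Ω ∧
    (∀ z ∈ Ω, IsUnit (S z).det →
      -(Gam⁻¹ * (S z)⁻¹ * Gam) = Gam * (S z)⁻¹ * Gam ∧
      Gam * (S z)⁻¹ * Gam = ((Gam * (S z)ᵀ * Gam)⁻¹)ᵀ) :=
  swap_transpose_primitive_general Ω Φ Ψ S hS
end
end

section
/- (Gauge ambiguity lemma.) Let C, D be 2×2 complex matrices of quaternionic form [[a,b],[−conj b, conj a]] satisfying Dᵀ(1+σ₃)C = 1+σ₃ and Dᵀ(σ₃−1)C = σ₃−1, where σ₃ = [[1,0],[0,−1]]. Then C and D are diagonal, C = [[c,0],[0,conj c]] for some nonzero c ∈ ℂ, and D = C⁻¹. -/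
open Complex Matrix Finset

noncomputable section

/-- A 2×2 complex matrix of quaternionic form `[[a, b], [−conj b, conj a]]`. -/
def IsQuat (M : Matrix (Fin 2) (Fin 2) ℂ) : Prop :=
  M 1 0 = -(starRingEnd ℂ) (M 0 1) ∧ M 1 1 = (starRingEnd ℂ) (M 0 0)

/- Since `1 + σ₃ = 2 E₀₀`, the first relation says that the outer product of the first rows of
`D` and `C` is `E₀₀`: so `d c = 1` for their `(0,0)` entries and both off-diagonal entries of
these rows vanish. The quaternionic form then makes `C` and `D` diagonal, with `D C = 1`. -/

theorem Matrix.mul_single_mul_apply {α l m n o : Type*} [Fintype m] [Fintype n] [DecidableEq m]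
    [DecidableEq n] [NonUnitalNonAssocSemiring α] (A : Matrix l m α) (k : m) (k' : n) (c : α)
    (B : Matrix n o α) (i : l) (j : o) :
    (A * single k k' c * B) i j = A i k * c * B k' j := by
  simp [mul_apply, single, ite_and]

theorem one_add_sig3 : 1 + sig3 = single 0 0 2 := by
  ext i j
  fin_cases i <;> fin_cases j <;> norm_num [sig3, single, one_apply]

namespace IsQuat

variable {M : Matrix (Fin 2) (Fin 2) ℂ}

theorem apply_one_zero_eq_zero (hM : IsQuat M) (h : M 0 1 = 0) : M 1 0 = 0 := by
  rw [hM.1, h, map_zero, neg_zero]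

theorem eq_of_apply_zero_one (hM : IsQuat M) (h : M 0 1 = 0) :
    M = !![M 0 0, 0; 0, (starRingEnd ℂ) (M 0 0)] := by
  ext i j
  fin_cases i <;> fin_cases j <;> simp [h, hM.1, hM.2]

end IsQuat

theorem gauge_ambiguity_general
    (C D : Matrix (Fin 2) (Fin 2) ℂ) (hC : IsQuat C) (hD : IsQuat D)
    (h1 : Dᵀ * (1 + sig3) * C = 1 + sig3) :
    C 0 1 = 0 ∧ C 1 0 = 0 ∧ D 0 1 = 0 ∧ D 1 0 = 0 ∧
    ∃ c : ℂ, c ≠ 0 ∧ C = !![c, 0; 0, (starRingEnd ℂ) c] ∧ D = C⁻¹ := by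
  have h (i j : Fin 2) : Dᵀ i 0 * 2 * C 0 j = single 0 0 2 i j := by
    rw [← Matrix.mul_single_mul_apply Dᵀ, ← one_add_sig3, h1]
  have hDC : D 0 0 * C 0 0 = 1 := by simpa [mul_right_comm _ (2 : ℂ)] using h 0 0
  have hC01 : C 0 1 = 0 := by simpa [left_ne_zero_of_mul_eq_one hDC] using h 0 1
  have hD01 : D 0 1 = 0 := by simpa [right_ne_zero_of_mul_eq_one hDC] using h 1 0
  have hC' := hC.eq_of_apply_zero_one hC01
  refine ⟨hC01, hC.apply_one_zero_eq_zero hC01, hD01, hD.apply_one_zero_eq_zero hD01,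
    C 0 0, right_ne_zero_of_mul_eq_one hDC, hC', (inv_eq_left_inv ?_).symm⟩
  rw [hD.eq_of_apply_zero_one hD01, hC', mul_fin_two, one_fin_two]
  simp [hDC, ← map_mul]

/-- gauge ambiguity lemma: quaternionic matrices `C`, `D` with
`Dᵀ(1+σ₃)C = 1+σ₃` and `Dᵀ(σ₃−1)C = σ₃−1` are diagonal, `C = [[c,0],[0,conj c]]`
with `c ≠ 0`, and `D = C⁻¹`. -/
theorem gauge_ambiguity
    (C D : Matrix (Fin 2) (Fin 2) ℂ) (hC : IsQuat C) (hD : IsQuat D)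
    (h1 : Dᵀ * (1 + sig3) * C = 1 + sig3)
    (h2 : Dᵀ * (sig3 - 1) * C = sig3 - 1) :
    C 0 1 = 0 ∧ C 1 0 = 0 ∧ D 0 1 = 0 ∧ D 1 0 = 0 ∧
    ∃ c : ℂ, c ≠ 0 ∧ C = !![c, 0; 0, (starRingEnd ℂ) c] ∧ D = C⁻¹ :=
  gauge_ambiguity_general C D hC hD h1
end
end

section
/- (Proposition 3, algebraic form.) Let ψ₁, ψ₂, φ₁, φ₂ ∈ ℂ, let Ψ = [[ψ₁, −conj ψ₂],[ψ₂, conj ψ₁]] and Φ = [[φ₁, −conj φ₂],[φ₂, conj φ₁]], and let x = (x¹,x²,x³,x⁴) ∈ ℝ⁴ be nonzero with associated matrix X(x) = [[i x³ + x⁴, −x¹ − i x²],[x¹ − i x², −i x³ + x⁴]]. Then the (2,2)-entry of K = Ψ · X(x)⁻¹ · Γ Φᵀ Γ⁻¹ equals (1/|x|²)·( x¹(ψ₂φ₁ − conj ψ₁ conj φ₂) + i x²(ψ₂φ₁ + conj ψ₁ conj φ₂) + i x³(conj ψ₁ φ₁ − ψ₂ conj φ₂) + x⁴(conj ψ₁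 φ₁ + ψ₂ conj φ₂) ), where |x|² = (x¹)²+(x²)²+(x³)²+(x⁴)². Consequently the potential increment of the Moutard transformation is W = i K₂₂ = ⟨r, p⟩/|r|², where r is the surface point and p = e^α(n₁ + i n₂) the complex normal vector of the Weierstrass representation. -/
open Complex Matrix Finset

noncomputable section

/-- The conformal factor `e^{2α} = (|ψ₁|² + |ψ₂|²)(|φ₁|² + |φ₂|²)`. -/
def weierE2a (ψ₁ ψ₂ φ₁ φ₂ : ℂ) : ℝ :=
  (Complex.normSq ψ₁ + Complex.normSq ψ₂) * (Complex.normSq φ₁ + Complex.normSq φ₂)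

/-- The normal vector `n₁` of the Weierstrass representation. -/
def weierN1 (ψ₁ ψ₂ φ₁ φ₂ : ℂ) : Fin 4 → ℝ := fun k =>
  (Real.sqrt (weierE2a ψ₁ ψ₂ φ₁ φ₂))⁻¹ *
    ![-(ψ₂ * φ₁ - (starRingEnd ℂ) ψ₁ * (starRingEnd ℂ) φ₂).im,
      -((starRingEnd ℂ) ψ₁ * (starRingEnd ℂ) φ₂ + ψ₂ * φ₁).re,
      (ψ₂ * (starRingEnd ℂ) φ₂ - (starRingEnd ℂ) ψ₁ * φ₁).re,
      -((starRingEnd ℂ) ψ₁ * φ₁ + ψ₂ * (starRingEnd ℂ) φ₂).im] k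

/-- The normal vector `n₂` of the Weierstrass representation. -/
def weierN2 (ψ₁ ψ₂ φ₁ φ₂ : ℂ) : Fin 4 → ℝ := fun k =>
  (Real.sqrt (weierE2a ψ₁ ψ₂ φ₁ φ₂))⁻¹ *
    ![(ψ₂ * φ₁ - (starRingEnd ℂ) ψ₁ * (starRingEnd ℂ) φ₂).re,
      -((starRingEnd ℂ) ψ₁ * (starRingEnd ℂ) φ₂ + ψ₂ * φ₁).im,
      (ψ₂ * (starRingEnd ℂ) φ₂ - (starRingEnd ℂ) ψ₁ * φ₁).im,
      ((starRingEnd ℂ) ψ₁ * φ₁ + ψ₂ * (starRingEnd ℂ) φ₂).re] k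

/-- The complex normal vector `p = e^α (n₁ + i n₂)`. -/
def weierP (ψ₁ ψ₂ φ₁ φ₂ : ℂ) : Fin 4 → ℂ := fun k =>
  (Real.sqrt (weierE2a ψ₁ ψ₂ φ₁ φ₂) : ℂ) *
    ((weierN1 ψ₁ ψ₂ φ₁ φ₂ k : ℂ) + Complex.I * (weierN2 ψ₁ ψ₂ φ₁ φ₂ k : ℂ))

/-- The quaternionic matrix associated to a (constant) spinor. -/
def quatOf (a b : ℂ) : Matrix (Fin 2) (Fin 2) ℂ :=
  !![a, -(starRingEnd ℂ) b; b, (starRingEnd ℂ) a]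

/-!
For `2 × 2` matrices `Γ Mᵀ Γ⁻¹ = adj M`, and `X(x)⁻¹ = adj X(x) / |x|²` because `det X(x) = |x|²`
(the quaternion norm). Hence `K = |x|⁻² Ψ adj X(x) adj Φ`, whose `(2,2)`-entry is read off
directly. The factor `e^α` in `p` cancels the normalisation `e^{-α}` of `n₁, n₂`, so the
components of `p` are, up to a factor `i`, the coefficients of that entry.
-/

theorem Gam_mul_transpose_mul_Gam_inv (M : Matrix (Fin 2) (Fin 2) ℂ) :
    Gam * Mᵀ * Gam⁻¹ = M.adjugate := by
  have hGam : Gam⁻¹ = -Gam :=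
    Matrix.inv_eq_right_inv (by ext i j; fin_cases i <;> fin_cases j <;> simp [Gam])
  rw [hGam, adjugate_fin_two]
  ext i j
  fin_cases i <;> fin_cases j <;> simp [Gam, mul_apply, vecMul, dotProduct, Fin.sum_univ_two]

theorem det_toU2 (x : Fin 4 → ℝ) : (toU2 x).det = ((∑ k, x k ^ 2 : ℝ) : ℂ) := by
  simp only [toU2, det_fin_two_of, Fin.sum_univ_four]
  push_cast
  linear_combination (-(x 1 : ℂ) ^ 2 - (x 2 : ℂ) ^ 2) * I_sq

theorem inv_toU2 (x : Fin 4 → ℝ) :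
    (toU2 x)⁻¹ = ((∑ k, x k ^ 2 : ℝ) : ℂ)⁻¹ • (toU2 x).adjugate := by
  rw [Matrix.inv_def, det_toU2, Ring.inverse_eq_inv']

theorem quatOf_mul_inv_toU2_mul_Gam_mul_transpose_mul_Gam_inv
    (ψ₁ ψ₂ φ₁ φ₂ : ℂ) (x : Fin 4 → ℝ) :
    quatOf ψ₁ ψ₂ * (toU2 x)⁻¹ * Gam * (quatOf φ₁ φ₂)ᵀ * Gam⁻¹ =
      ((∑ k, x k ^ 2 : ℝ) : ℂ)⁻¹ •
        (quatOf ψ₁ ψ₂ * (toU2 x).adjugate * (quatOf φ₁ φ₂).adjugate) := by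
  rw [Matrix.mul_assoc _ Gam, Matrix.mul_assoc _ (Gam * _), Gam_mul_transpose_mul_Gam_inv,
    inv_toU2, Matrix.mul_smul, Matrix.smul_mul]

theorem quatOf_mul_adjugate_toU2_mul_adjugate_quatOf_one_one
    (ψ₁ ψ₂ φ₁ φ₂ : ℂ) (x : Fin 4 → ℝ) :
    (quatOf ψ₁ ψ₂ * (toU2 x).adjugate * (quatOf φ₁ φ₂).adjugate) 1 1 =
      (x 0 : ℂ) * (ψ₂ * φ₁ - (starRingEnd ℂ) ψ₁ * (starRingEnd ℂ) φ₂) +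
        I * (x 1 : ℂ) * (ψ₂ * φ₁ + (starRingEnd ℂ) ψ₁ * (starRingEnd ℂ) φ₂) +
        I * (x 2 : ℂ) * ((starRingEnd ℂ) ψ₁ * φ₁ - ψ₂ * (starRingEnd ℂ) φ₂) +
        (x 3 : ℂ) * ((starRingEnd ℂ) ψ₁ * φ₁ + ψ₂ * (starRingEnd ℂ) φ₂) := by
  simp only [quatOf, toU2, adjugate_fin_two_of, mul_apply, Fin.sum_univ_two, of_apply,
    cons_val', cons_val_zero, cons_val_one, empty_val', cons_val_fin_one]
  ring

theorem weierP_eq_of_pos (ψ₁ ψ₂ φ₁ φ₂ : ℂ) (hpos : 0 < weierE2a ψ₁ ψ₂ φ₁ φ₂) :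
    weierP ψ₁ ψ₂ φ₁ φ₂ =
      ![I * (ψ₂ * φ₁ - (starRingEnd ℂ) ψ₁ * (starRingEnd ℂ) φ₂),
        -((starRingEnd ℂ) ψ₁ * (starRingEnd ℂ) φ₂ + ψ₂ * φ₁),
        ψ₂ * (starRingEnd ℂ) φ₂ - (starRingEnd ℂ) ψ₁ * φ₁,
        I * ((starRingEnd ℂ) ψ₁ * φ₁ + ψ₂ * (starRingEnd ℂ) φ₂)] := by
  have hsqrt : Real.sqrt (weierE2a ψ₁ ψ₂ φ₁ φ₂) ≠ 0 := (Real.sqrt_pos.mpr hpos).ne'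
  funext k
  fin_cases k <;>
  · apply Complex.ext <;>
      simp [weierP, weierN1, weierN2, Complex.mul_re, Complex.mul_im, hsqrt]

theorem moutard_increment_formula_general
    (ψ₁ ψ₂ φ₁ φ₂ : ℂ) (x : Fin 4 → ℝ)
    (hpos : 0 < weierE2a ψ₁ ψ₂ φ₁ φ₂) :
    (quatOf ψ₁ ψ₂ * (toU2 x)⁻¹ * Gam * (quatOf φ₁ φ₂)ᵀ * Gam⁻¹) 1 1 =
      (1 / ((∑ k, x k ^ 2 : ℝ) : ℂ)) *
        ((x 0 : ℂ) * (ψ₂ * φ₁ - (starRingEnd ℂ) ψ₁ * (starRingEnd ℂ) φ₂) +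
          Complex.I * (x 1 : ℂ) * (ψ₂ * φ₁ + (starRingEnd ℂ) ψ₁ * (starRingEnd ℂ) φ₂) +
          Complex.I * (x 2 : ℂ) * ((starRingEnd ℂ) ψ₁ * φ₁ - ψ₂ * (starRingEnd ℂ) φ₂) +
          (x 3 : ℂ) * ((starRingEnd ℂ) ψ₁ * φ₁ + ψ₂ * (starRingEnd ℂ) φ₂)) ∧
    Complex.I * (quatOf ψ₁ ψ₂ * (toU2 x)⁻¹ * Gam * (quatOf φ₁ φ₂)ᵀ * Gam⁻¹) 1 1 =
      (∑ k, (x k : ℂ) * weierP ψ₁ ψ₂ φ₁ φ₂ k) / ((∑ k, x k ^ 2 : ℝ) : ℂ) := by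
  rw [quatOf_mul_inv_toU2_mul_Gam_mul_transpose_mul_Gam_inv, Matrix.smul_apply, smul_eq_mul,
    quatOf_mul_adjugate_toU2_mul_adjugate_quatOf_one_one, weierP_eq_of_pos ψ₁ ψ₂ φ₁ φ₂ hpos,
    one_div]
  refine ⟨rfl, ?_⟩
  set r2 : ℂ := ((∑ k, x k ^ 2 : ℝ) : ℂ)
  simp only [Fin.sum_univ_four, cons_val_zero, cons_val_one, cons_val_two, cons_val_three,
    head_cons, tail_cons]
  linear_combination r2⁻¹ * ((x 1 : ℂ) * (ψ₂ * φ₁ + (starRingEnd ℂ) ψ₁ * (starRingEnd ℂ) φ₂) +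
    (x 2 : ℂ) * ((starRingEnd ℂ) ψ₁ * φ₁ - ψ₂ * (starRingEnd ℂ) φ₂)) * I_sq

/-- Proposition 3, algebraic form: the `(2,2)`-entry of
`K = Ψ X(x)⁻¹ Γ Φᵀ Γ⁻¹` and the identity `W = i K₂₂ = ⟨r, p⟩/|r|²`. -/
theorem moutard_increment_formula
    (ψ₁ ψ₂ φ₁ φ₂ : ℂ) (x : Fin 4 → ℝ) (hx : x ≠ 0)
    (hpos : 0 < weierE2a ψ₁ ψ₂ φ₁ φ₂) :
    (quatOf ψ₁ ψ₂ * (toU2 x)⁻¹ * Gam * (quatOf φ₁ φ₂)ᵀ * Gam⁻¹) 1 1 =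
      (1 / ((∑ k, x k ^ 2 : ℝ) : ℂ)) *
        ((x 0 : ℂ) * (ψ₂ * φ₁ - (starRingEnd ℂ) ψ₁ * (starRingEnd ℂ) φ₂) +
          Complex.I * (x 1 : ℂ) * (ψ₂ * φ₁ + (starRingEnd ℂ) ψ₁ * (starRingEnd ℂ) φ₂) +
          Complex.I * (x 2 : ℂ) * ((starRingEnd ℂ) ψ₁ * φ₁ - ψ₂ * (starRingEnd ℂ) φ₂) +
          (x 3 : ℂ) * ((starRingEnd ℂ) ψ₁ * φ₁ + ψ₂ * (starRingEnd ℂ) φ₂)) ∧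
    Complex.I * (quatOf ψ₁ ψ₂ * (toU2 x)⁻¹ * Gam * (quatOf φ₁ φ₂)ᵀ * Gam⁻¹) 1 1 =
      (∑ k, (x k : ℂ) * weierP ψ₁ ψ₂ φ₁ φ₂ k) / ((∑ k, x k ^ 2 : ℝ) : ℂ) :=
  moutard_increment_formula_general ψ₁ ψ₂ φ₁ φ₂ x hpos
end
end

section
/- (Weierstrass data of the Clifford torus.) The spinors ψ₀ = (e^{−i(x+y)/2}/√2)·(e^{3πi/8}, e^{−3πi/8}) and φ₀ = (e^{i(y−x)/2}/2)·(−e^{−3πi/8}, e^{3πi/8}), regarded as functions of z = x + iy, satisfy the Dirac equations Dψ₀ = 0 and D^∨φ₀ = 0 with the constant potential U = −i/√8. Moreover, the Weierstrass derivatives x¹_z = (i/2)(conj φ₀₂ conj ψ₀₂ + φ₀₁ψ₀₁), x²_z = (1/2)(conj φ₀₂ conj ψ₀₂ − φ₀₁ψ₀₁), x³_z = (1/2)(conj φ₀₂ ψ₀₁ + φ₀₁ conj ψ₀₂), x⁴_z = (i/2)(conj φ₀₂ ψ₀₁ − φ₀₁ conj ψ₀₂) are the z-derivatives of the parameterization x¹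 = cos(x)/√2, x² = sin(x)/√2, x³ = −cos(y)/√2, x⁴ = −sin(y)/√2 of the Clifford torus { (x¹)²+(x²)² = 1/2, (x³)²+(x⁴)² = 1/2 } ⊂ ℝ⁴. -/
open Complex Matrix Finset

noncomputable section

/-- First spinor component `ψ₀₁ = (e^{−i(x+y)/2}/√2)·e^{3πi/8}` of the Clifford torus. -/
def cliffPsi1 (z : ℂ) : ℂ :=
  Complex.exp (-(Complex.I * ((z.re : ℂ) + (z.im : ℂ))) / 2) / (Real.sqrt 2 : ℂ) *
    Complex.exp (Complex.I * (3 * Real.pi / 8))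

/-- Second spinor component `ψ₀₂ = (e^{−i(x+y)/2}/√2)·e^{−3πi/8}` of the Clifford torus. -/
def cliffPsi2 (z : ℂ) : ℂ :=
  Complex.exp (-(Complex.I * ((z.re : ℂ) + (z.im : ℂ))) / 2) / (Real.sqrt 2 : ℂ) *
    Complex.exp (-(Complex.I * (3 * Real.pi / 8)))

/-- First spinor component `φ₀₁ = (e^{i(y−x)/2}/2)·(−e^{−3πi/8})` of the Clifford torus. -/
def cliffPhi1 (z : ℂ) : ℂ :=
  Complex.exp (Complex.I * ((z.im : ℂ) - (z.re : ℂ)) / 2) / 2 *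
    (-Complex.exp (-(Complex.I * (3 * Real.pi / 8))))

/-- Second spinor component `φ₀₂ = (e^{i(y−x)/2}/2)·e^{3πi/8}` of the Clifford torus. -/
def cliffPhi2 (z : ℂ) : ℂ :=
  Complex.exp (Complex.I * ((z.im : ℂ) - (z.re : ℂ)) / 2) / 2 *
    Complex.exp (Complex.I * (3 * Real.pi / 8))

/-- The parameterization `(cos x/√2, sin x/√2, −cos y/√2, −sin y/√2)` of the Clifford torus. -/
def cliffordTorus (z : ℂ) : Fin 4 → ℝ :=
  ![Real.cos z.re / Real.sqrt 2, Real.sin z.re / Real.sqrt 2,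
    -Real.cos z.im / Real.sqrt 2, -Real.sin z.im / Real.sqrt 2]

/-! Every component of `ψ₀` and `φ₀` is a constant multiple of a plane wave `e^{i(px+qy)}`, on
which `∂` and `∂̄` act as multiplication by `(q + ip)/2` and `(−q + ip)/2`. The Dirac equations
thus reduce to algebraic identities between the constant coefficients, which hold because the
phase `θ = e^{3πi/8}` satisfies `√2 θ² = −1 + i`. In the Weierstrass products the phases cancel
(`θ̄ = θ⁻¹`) and the plane waves multiply to `e^{±ix}`, `e^{±iy}`, whose combinations are the
`z`-derivatives of the trigonometric coordinates of the torus. -/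

open scoped Real

theorem HasFDerivAt.wdz_eq {f : ℂ → ℂ} {L : ℂ →L[ℝ] ℂ} {z : ℂ} (h : HasFDerivAt f L z) :
    wdz f z = (L 1 - I * L I) / 2 := by
  rw [wdz, h.fderiv]; ring

theorem HasFDerivAt.wdzb_eq {f : ℂ → ℂ} {L : ℂ →L[ℝ] ℂ} {z : ℂ} (h : HasFDerivAt f L z) :
    wdzb f z = (L 1 + I * L I) / 2 := by
  rw [wdzb, h.fderiv]; ring

theorem wdz_ofReal_comp_re {f : ℝ → ℝ} {f' : ℝ} {z : ℂ} (hf : HasDerivAt f f' z.re) :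
    wdz (fun w : ℂ => (f w.re : ℂ)) z = f' / 2 := by
  have h : HasFDerivAt (fun w : ℂ => (f w.re : ℂ)) _ z :=
    ofRealCLM.hasFDerivAt.comp z (hf.comp_hasFDerivAt z reCLM.hasFDerivAt)
  rw [h.wdz_eq]
  simp

theorem wdz_ofReal_comp_im {f : ℝ → ℝ} {f' : ℝ} {z : ℂ} (hf : HasDerivAt f f' z.im) :
    wdz (fun w : ℂ => (f w.im : ℂ)) z = -I * f' / 2 := by
  have h : HasFDerivAt (fun w : ℂ => (f w.im : ℂ)) _ z :=
    ofRealCLM.hasFDerivAt.comp z (hf.comp_hasFDerivAt z imCLM.hasFDerivAt)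
  rw [h.wdz_eq]
  simp

def planeWave (p q : ℝ) (w : ℂ) : ℂ := exp ((p * w.re + q * w.im : ℝ) * I)

theorem hasFDerivAt_planeWave (p q : ℝ) (z : ℂ) :
    HasFDerivAt (planeWave p q)
      (planeWave p q z • ((p * I) • ofRealCLM.comp reCLM + (q * I) • ofRealCLM.comp imCLM))
      z := by
  set L : ℂ →L[ℝ] ℂ := (p * I) • ofRealCLM.comp reCLM + (q * I) • ofRealCLM.comp imCLM
  have hlin : HasFDerivAt (fun w : ℂ => ((p * w.re + q * w.im : ℝ) : ℂ) * I) L z :=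
    L.hasFDerivAt.congr_of_eventuallyEq (.of_forall fun w => by simp [L]; ring)
  exact hlin.cexp

theorem wdz_const_mul_planeWave (c : ℂ) (p q : ℝ) (z : ℂ) :
    wdz (fun w => c * planeWave p q w) z = c * ((q + p * I) / 2) * planeWave p q z := by
  rw [((hasFDerivAt_planeWave p q z).const_mul c).wdz_eq]
  simp only [_root_.smul_apply, _root_.add_apply, ContinuousLinearMap.comp_apply, reCLM_apply,
    imCLM_apply, ofRealCLM_apply, one_re, one_im, I_re, I_im, smul_eq_mul, ofReal_one, ofReal_zero]
  linear_combination (-(c * planeWave p q z * q) / 2) * I_sq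

theorem wdzb_const_mul_planeWave (c : ℂ) (p q : ℝ) (z : ℂ) :
    wdzb (fun w => c * planeWave p q w) z = c * ((-q + p * I) / 2) * planeWave p q z := by
  rw [((hasFDerivAt_planeWave p q z).const_mul c).wdzb_eq]
  simp only [_root_.smul_apply, _root_.add_apply, ContinuousLinearMap.comp_apply, reCLM_apply,
    imCLM_apply, ofRealCLM_apply, one_re, one_im, I_re, I_im, smul_eq_mul, ofReal_one, ofReal_zero]
  linear_combination (c * planeWave p q z * q / 2) * I_sq

theorem conj_planeWave (p q : ℝ) (w : ℂ) :
    (starRingEnd ℂ) (planeWave p q w) = planeWave (-p) (-q) w := by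
  rw [planeWave, planeWave, ← exp_conj]
  simp only [ofReal_add, ofReal_mul, map_mul, map_add, conj_ofReal, conj_I, mul_neg, neg_mul,
    ofReal_neg]
  ring_nf

theorem planeWave_mul (p q p' q' : ℝ) (w : ℂ) :
    planeWave p q w * planeWave p' q' w = planeWave (p + p') (q + q') w := by
  rw [planeWave, planeWave, planeWave, ← exp_add]
  push_cast; ring_nf

theorem planeWave_eq (p q : ℝ) (w : ℂ) :
    planeWave p q w = Real.cos (p * w.re + q * w.im) + Real.sin (p * w.re + q * w.im) * I := by
  rw [planeWave, exp_mul_I, ofReal_cos, ofReal_sin]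

theorem diracEq_const_mul_planeWave {U c₁ c₂ : ℂ} {p q : ℝ} (Ω : Set ℂ)
    (h₁ : c₂ * ((q + p * I) / 2) + U * c₁ = 0)
    (h₂ : -(c₁ * ((-q + p * I) / 2)) + (starRingEnd ℂ) U * c₂ = 0) :
    DiracEq (fun _ => U) (fun w => c₁ * planeWave p q w) (fun w => c₂ * planeWave p q w)
      Ω := by
  intro z _
  rw [wdz_const_mul_planeWave, wdzb_const_mul_planeWave]
  constructor
  · linear_combination planeWave p q z * h₁
  · linear_combination planeWave p q z * h₂

theorem ofReal_sqrt_two_sq : ((√2 : ℝ) : ℂ) ^ 2 = 2 := by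
  norm_cast; exact Real.sq_sqrt (by norm_num)

theorem ofReal_sqrt_eight : ((√8 : ℝ) : ℂ) = 2 * √2 := by
  rw [show (8 : ℝ) = 2 ^ 2 * 2 by norm_num, Real.sqrt_mul (by positivity),
    Real.sqrt_sq (by norm_num)]
  push_cast; ring

def cliffordPhase : ℂ := exp (I * (3 * π / 8))

theorem cliffordPhase_ne_zero : cliffordPhase ≠ 0 := exp_ne_zero _

theorem sqrt_two_mul_cliffordPhase_sq : √2 * cliffordPhase ^ 2 = -1 + I := by
  have h : cliffordPhase ^ 2 = exp ((π - π / 4 : ℝ) * I) := by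
    rw [cliffordPhase, ← exp_nat_mul]; push_cast; ring_nf
  rw [h, exp_mul_I, ← ofReal_cos, ← ofReal_sin, Real.cos_pi_sub, Real.sin_pi_sub,
    Real.cos_pi_div_four, Real.sin_pi_div_four]
  push_cast
  field_simp
  linear_combination (-1 + I) * ofReal_sqrt_two_sq

theorem exp_neg_cliffordPhase : exp (-(I * (3 * π / 8))) = cliffordPhase⁻¹ := exp_neg _

theorem conj_cliffordPhase : (starRingEnd ℂ) cliffordPhase = cliffordPhase⁻¹ := by
  rw [cliffordPhase, ← exp_conj, ← exp_neg]
  simp [map_ofNat]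

theorem cliffPsi1_eq : cliffPsi1 = fun w => cliffordPhase / √2 * planeWave (-1/2) (-1/2) w := by
  funext w
  rw [cliffPsi1, cliffordPhase, planeWave]
  push_cast; ring_nf

theorem cliffPsi2_eq :
    cliffPsi2 = fun w => cliffordPhase⁻¹ / √2 * planeWave (-1/2) (-1/2) w := by
  funext w
  rw [cliffPsi2, exp_neg_cliffordPhase, planeWave]
  push_cast; ring_nf

theorem cliffPhi1_eq : cliffPhi1 = fun w => -cliffordPhase⁻¹ / 2 * planeWave (-1/2) (1/2) w := by
  funext w
  rw [cliffPhi1, exp_neg_cliffordPhase, planeWave]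
  push_cast; ring_nf

theorem cliffPhi2_eq : cliffPhi2 = fun w => cliffordPhase / 2 * planeWave (-1/2) (1/2) w := by
  funext w
  rw [cliffPhi2, cliffordPhase, planeWave]
  push_cast; ring_nf

theorem diracEq_cliffPsi :
    DiracEq (fun _ => -I / (√8 : ℂ)) cliffPsi1 cliffPsi2 Set.univ := by
  rw [cliffPsi1_eq, cliffPsi2_eq]
  have hθ := sqrt_two_mul_cliffordPhase_sq
  have hθ₀ := cliffordPhase_ne_zero
  have hs := ofReal_sqrt_two_sq
  apply diracEq_const_mul_planeWave <;>
    simp only [ofReal_sqrt_eight, map_div₀, map_neg, map_mul, conj_I, map_ofNat, conj_ofReal] <;>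
    push_cast <;> field_simp <;> grind [I_sq]

theorem diracEq_cliffPhi :
    DiracEq (fun _ => (starRingEnd ℂ) (-I / (√8 : ℂ))) cliffPhi1 cliffPhi2 Set.univ := by
  rw [cliffPhi1_eq, cliffPhi2_eq]
  have hθ := sqrt_two_mul_cliffordPhase_sq
  have hθ₀ := cliffordPhase_ne_zero
  have hs := ofReal_sqrt_two_sq
  apply diracEq_const_mul_planeWave <;>
    simp only [ofReal_sqrt_eight, map_div₀, map_neg, map_mul, conj_I, map_ofNat, conj_ofReal] <;>
    push_cast <;> field_simp <;> grind [I_sq]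

theorem const_mul_planeWave_mul (a b : ℂ) (p q p' q' : ℝ) (w : ℂ) :
    a * planeWave p q w * (b * planeWave p' q' w) = a * b * planeWave (p + p') (q + q') w := by
  rw [← planeWave_mul]; ring

theorem conj_cliffPsi2 (z : ℂ) :
    (starRingEnd ℂ) (cliffPsi2 z) = cliffordPhase / √2 * planeWave (1/2) (1/2) z := by
  rw [cliffPsi2_eq]
  simp only [map_mul, map_div₀, map_inv₀, conj_cliffordPhase, inv_inv, conj_ofReal,
    conj_planeWave]
  norm_num

theorem conj_cliffPhi2 (z : ℂ) :
    (starRingEnd ℂ) (cliffPhi2 z) = cliffordPhase⁻¹ / 2 * planeWave (1/2) (-1/2) z := by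
  rw [cliffPhi2_eq]
  simp only [map_mul, map_div₀, conj_cliffordPhase, map_ofNat, conj_planeWave]
  norm_num

theorem weierXz_clifford (z : ℂ) :
    weierXz (cliffPsi1 z) (cliffPsi2 z) (cliffPhi1 z) (cliffPhi2 z) =
      ![(-Real.sin z.re / (2 * √2) : ℂ), Real.cos z.re / (2 * √2),
        -I * Real.sin z.im / (2 * √2), I * Real.cos z.im / (2 * √2)] := by
  have hθ₀ := cliffordPhase_ne_zero
  have hs : (√2 : ℂ) ≠ 0 := by simp
  funext k
  fin_cases k <;>
    simp only [weierXz, conj_cliffPsi2, conj_cliffPhi2, cliffPsi1_eq, cliffPhi1_eq,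
      const_mul_planeWave_mul] <;> norm_num [planeWave_eq] <;> field_simp <;> grind [I_sq]

theorem wdz_cliffordTorus (z : ℂ) :
    (fun k => wdz (fun w => (cliffordTorus w k : ℂ)) z) =
      ![(-Real.sin z.re / (2 * √2) : ℂ), Real.cos z.re / (2 * √2),
        -I * Real.sin z.im / (2 * √2), I * Real.cos z.im / (2 * √2)] := by
  funext k
  fin_cases k
  · refine (wdz_ofReal_comp_re (f := fun t => Real.cos t / √2)
      ((Real.hasDerivAt_cos _).div_const _)).trans ?_
    push_cast; ring
  · refine (wdz_ofReal_comp_re (f := fun t => Real.sin t / √2)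
      ((Real.hasDerivAt_sin _).div_const _)).trans ?_
    push_cast; ring
  · refine (wdz_ofReal_comp_im (f := fun t => -Real.cos t / √2)
      ((Real.hasDerivAt_cos _).neg.div_const _)).trans ?_
    push_cast; ring
  · refine (wdz_ofReal_comp_im (f := fun t => -Real.sin t / √2)
      ((Real.hasDerivAt_sin _).neg.div_const _)).trans ?_
    push_cast; ring

theorem cliffordTorus_sq_add_sq (z : ℂ) :
    cliffordTorus z 0 ^ 2 + cliffordTorus z 1 ^ 2 = 1 / 2 ∧
      cliffordTorus z 2 ^ 2 + cliffordTorus z 3 ^ 2 = 1 / 2 := by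
  have hs : √2 ^ 2 = 2 := Real.sq_sqrt (by norm_num)
  simp only [cliffordTorus, Matrix.cons_val, div_pow, neg_sq, ← add_div, Real.cos_sq_add_sin_sq,
    hs, and_self]

/-- Weierstrass data of the Clifford torus: the spinors `ψ₀`, `φ₀` solve the
Dirac equations with the constant potential `U = −i/√8`, and their Weierstrass derivatives are
the `z`-derivatives of the parameterization of the Clifford torus
`{(x¹)²+(x²)² = 1/2, (x³)²+(x⁴)² = 1/2} ⊂ ℝ⁴`. -/
theorem clifford_torus_weierstrass_data :
    DiracEq (fun _ => -Complex.I / (Real.sqrt 8 : ℂ)) cliffPsi1 cliffPsi2 Set.univ ∧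
    DiracEq (fun _ => (starRingEnd ℂ) (-Complex.I / (Real.sqrt 8 : ℂ)))
      cliffPhi1 cliffPhi2 Set.univ ∧
    (∀ z : ℂ, ∀ k : Fin 4,
      wdz (fun w => ((cliffordTorus w k : ℝ) : ℂ)) z =
        weierXz (cliffPsi1 z) (cliffPsi2 z) (cliffPhi1 z) (cliffPhi2 z) k) ∧
    (∀ z : ℂ,
      cliffordTorus z 0 ^ 2 + cliffordTorus z 1 ^ 2 = 1 / 2 ∧
      cliffordTorus z 2 ^ 2 + cliffordTorus z 3 ^ 2 = 1 / 2) :=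
  ⟨diracEq_cliffPsi, diracEq_cliffPhi,
    fun z => congrFun ((wdz_cliffordTorus z).trans (weierXz_clifford z).symm),
    cliffordTorus_sq_add_sq⟩
end
end
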